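/- Suppose 1 ∈ U and U contains elements u, v, w such that 1, u, v, w are pairwise non-±-equal. Then for every x ∈ R(U) and every p ∈ P, the product p·x lies in R(U); consequently the subring ℤ[P] of ℝ generated by P satisfies ℤ[P] ⊆ R(U). -/

import Mathlib

/-!
Line intersection is real-bilinear in the two base points, so multiplication by a real number
commutes with it: if a real `r` lies in `R(U)`, induction along the `S n` gives `r * R(U) ⊆ R(U)`,
and the elements of `P` lie in `S 2`. With three pairwise independent directions `u, v, w`, fixed
compositions of intersections realise `x ↦ -x` and `(x, y) ↦ x + y` (going around the three axes
through parallel projections multiplies by `-1`), so `R(U)` is an additive group. The reals that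
multiply an additive group into itself form a subring, which therefore contains `ℤ[P]`.
-/

open Complex

/-- The bracket `[x,y] = x * conj y - y * conj x`. -/
noncomputable def brkt (x y : ℂ) : ℂ := x * (starRingEnd ℂ) y - y * (starRingEnd ℂ) x

/-- `lineInt α β p q` is the intersection point `I_{α,β}(p,q)` of the line through `p`
with direction `α` and the line through `q` with direction `β` (for unit `α ≠ ±β`),
given by the formula of Buhler et al. -/
noncomputable def lineInt (α β p q : ℂ) : ℂ :=
  brkt α p / brkt α β * β + brkt β q / brkt β α * α

/-- The sets `S n` in the inductive construction. -/
def stepSet (U : Set ℂ) : ℕ → Set ℂ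
  | 0 => {0, 1}
  | n + 1 => {z | ∃ α ∈ U, ∃ β ∈ U, α ≠ β ∧ α ≠ -β ∧
      ∃ p ∈ stepSet U n, ∃ q ∈ stepSet U n, z = lineInt α β p q}

/-- `RU U = ⋃ n, S n`. -/
def RU (U : Set ℂ) : Set ℂ := ⋃ n, stepSet U n

/-- Elementary monomials of `U`. -/
def IsElem (U : Set ℂ) (z : ℂ) : Prop :=
  ∃ α ∈ U, ∃ β ∈ U, α ≠ β ∧ α ≠ -β ∧ z = lineInt α β 0 1

/-- Monomials of `U`, defined inductively. -/
inductive IsMonomial (U : Set ℂ) : ℂ → Prop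
  | elementary (α β : ℂ) (hα : α ∈ U) (hβ : β ∈ U) (h1 : α ≠ β) (h2 : α ≠ -β) :
      IsMonomial U (lineInt α β 0 1)
  | step (α β m : ℂ) (hα : α ∈ U) (hβ : β ∈ U) (h1 : α ≠ β) (h2 : α ≠ -β)
      (hm : IsMonomial U m) : IsMonomial U (lineInt α β 0 m)

/-- `P`: the real numbers arising as length-two monomials `I_{γ,δ}(0,z)` on the real axis. -/
def projSet (U : Set ℂ) : Set ℝ :=
  {r | ∃ γ ∈ U, ∃ δ ∈ U, γ ≠ δ ∧ γ ≠ -δ ∧ ∃ z, IsElem U z ∧ (r : ℂ) = lineInt γ δ 0 z}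

/-- `m` is a `ℤ[P]`-linear combination of elementary monomials of `U`. -/
def IsZPComb (U : Set ℂ) (m : ℂ) : Prop :=
  ∃ (n : ℕ) (c : Fin n → ℝ) (z : Fin n → ℂ),
    (∀ i, c i ∈ Subring.closure (projSet U)) ∧ (∀ i, IsElem U (z i)) ∧
    m = ∑ i, (c i : ℂ) * z i

open ComplexConjugate

lemma brkt_comm (x y : ℂ) : brkt y x = -brkt x y := by
  unfold brkt; ring

lemma brkt_conj (x y : ℂ) : conj (brkt x y) = -brkt x y := by
  simp only [brkt, map_sub, map_mul, conj_conj]; ring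

lemma brkt_add_ofReal_mul_self (x p : ℂ) (t : ℝ) : brkt x (p + t * x) = brkt x p := by
  simp only [brkt, map_add, map_mul, conj_ofReal]; ring

lemma brkt_ne_zero {α β : ℂ} (hα : ‖α‖ = 1) (hβ : ‖β‖ = 1) (h₁ : α ≠ β) (h₂ : α ≠ -β) :
    brkt α β ≠ 0 := by
  have hα₀ : α ≠ 0 := norm_ne_zero_iff.mp (by rw [hα]; exact one_ne_zero)
  have hβ₀ : β ≠ 0 := norm_ne_zero_iff.mp (by rw [hβ]; exact one_ne_zero)
  rw [brkt, ← inv_eq_conj hα, ← inv_eq_conj hβ]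
  intro h
  have hsq : α * α = β * β := by field_simp at h; linear_combination h
  exact (mul_self_eq_mul_self_iff.mp hsq).elim h₁ h₂

section LineIntersection

variable {α β : ℂ}

lemma lineInt_self (h : brkt α β ≠ 0) (z : ℂ) : lineInt α β z z = z := by
  have h' : brkt β α ≠ 0 := by rw [brkt_comm]; exact neg_ne_zero.mpr h
  rw [lineInt]
  field_simp
  simp only [brkt]
  ring

lemma lineInt_eq_of_eq_add (h : brkt α β ≠ 0) {p q z : ℂ} (t s : ℝ)
    (hp : z = p + t * α) (hq : z = q + s * β) : lineInt α β p q = z := by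
  have hp' : p = z + ((-t : ℝ) : ℂ) * α := by rw [hp]; push_cast; ring
  have hq' : q = z + ((-s : ℝ) : ℂ) * β := by rw [hq]; push_cast; ring
  rw [hp', hq', lineInt, brkt_add_ofReal_mul_self, brkt_add_ofReal_mul_self, ← lineInt,
    lineInt_self h]

lemma lineInt_ofReal_mul (p q : ℂ) (r : ℝ) :
    lineInt α β (r * p) (r * q) = r * lineInt α β p q := by
  simp only [lineInt, brkt, map_mul, conj_ofReal]
  ring

lemma exists_real_coords (h : brkt α β ≠ 0) (z : ℂ) : ∃ a b : ℝ, z = a * α + b * β := by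
  have h' : brkt β α ≠ 0 := by rw [brkt_comm]; exact neg_ne_zero.mpr h
  have real_ratio : ∀ x y : ℂ, ((brkt x z / brkt x y).re : ℂ) = brkt x z / brkt x y := by
    intro x y
    rw [← conj_eq_iff_re, map_div₀, brkt_conj, brkt_conj, neg_div_neg_eq]
  refine ⟨(brkt β z / brkt β α).re, (brkt α z / brkt α β).re, ?_⟩
  rw [real_ratio, real_ratio]
  field_simp
  simp only [brkt]
  ring

end LineIntersection

section Coordinates

variable {α β γ : ℂ} {g₁ g₂ : ℝ}

lemma lineInt_coords (h : brkt α β ≠ 0) (a b c d : ℝ) :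
    lineInt α β (a * α + b * β) (c * α + d * β) = c * α + b * β :=
  lineInt_eq_of_eq_add h (c - a) (b - d) (by push_cast; ring) (by push_cast; ring)

lemma lineInt_coords_left (h : brkt α γ ≠ 0) (hγ : γ = g₁ * α + g₂ * β) (hg₂ : g₂ ≠ 0)
    (a b c d : ℝ) :
    lineInt α γ (a * α + b * β) (c * α + d * β) = ↑(c + g₁ / g₂ * (b - d)) * α + b * β :=
  lineInt_eq_of_eq_add h (c - a + g₁ / g₂ * (b - d)) ((b - d) / g₂) (by push_cast; ring)
    (by have := ofReal_ne_zero.mpr hg₂; rw [hγ]; push_cast; field_simp; ring)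

lemma lineInt_coords_right (h : brkt β γ ≠ 0) (hγ : γ = g₁ * α + g₂ * β) (hg₁ : g₁ ≠ 0)
    (a b c d : ℝ) :
    lineInt β γ (a * α + b * β) (c * α + d * β) = a * α + ↑(d + g₂ / g₁ * (a - c)) * β :=
  lineInt_eq_of_eq_add h (d - b + g₂ / g₁ * (a - c)) ((a - c) / g₁) (by push_cast; ring)
    (by have := ofReal_ne_zero.mpr hg₁; rw [hγ]; push_cast; field_simp; ring)

end Coordinates

section ThreeDirections

variable {α β γ : ℂ}

lemma exists_coords_ne_zero (hαβ : brkt α β ≠ 0) (hαγ : brkt α γ ≠ 0) (hβγ : brkt β γ ≠ 0) :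
    ∃ g₁ g₂ : ℝ, g₁ ≠ 0 ∧ g₂ ≠ 0 ∧ γ = g₁ * α + g₂ * β := by
  obtain ⟨g₁, g₂, hγ⟩ := exists_real_coords hαβ γ
  refine ⟨g₁, g₂, ?_, ?_, hγ⟩
  · rintro rfl
    apply hβγ
    simp only [hγ, brkt, ofReal_zero, zero_mul, zero_add, map_mul, conj_ofReal]
    ring
  · rintro rfl
    apply hαγ
    simp only [hγ, brkt, ofReal_zero, zero_mul, add_zero, map_mul, conj_ofReal]
    ring

lemma lineInt_neg_eq (hαβ : brkt α β ≠ 0) (hαγ : brkt α γ ≠ 0) (hβγ : brkt β γ ≠ 0) (x : ℂ) :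
    lineInt α β (lineInt β γ 0 (lineInt α β 0 (lineInt α γ x 0)))
      (lineInt α γ 0 (lineInt α β (lineInt β γ x 0) 0)) = -x := by
  obtain ⟨g₁, g₂, hg₁, hg₂, hγ⟩ := exists_coords_ne_zero hαβ hαγ hβγ
  obtain ⟨a, b, rfl⟩ := exists_real_coords hαβ x
  rw [show (0 : ℂ) = ((0 : ℝ) : ℂ) * α + ((0 : ℝ) : ℂ) * β by simp]
  simp only [lineInt_coords hαβ, lineInt_coords_left hαγ hγ hg₂,
    lineInt_coords_right hβγ hγ hg₁]
  have := ofReal_ne_zero.mpr hg₁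
  have := ofReal_ne_zero.mpr hg₂
  push_cast
  field_simp
  ring

lemma lineInt_add_eq (hαβ : brkt α β ≠ 0) (hαγ : brkt α γ ≠ 0) (hβγ : brkt β γ ≠ 0)
    (x y : ℂ) :
    lineInt α β (lineInt β γ (lineInt α γ x (lineInt α β 0 x)) (lineInt α β y x))
      (lineInt α γ (lineInt β γ x (lineInt α β x 0)) (lineInt α β x y)) = x + y := by
  obtain ⟨g₁, g₂, hg₁, hg₂, hγ⟩ := exists_coords_ne_zero hαβ hαγ hβγ
  obtain ⟨a, b, rfl⟩ := exists_real_coords hαβ x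
  obtain ⟨c, d, rfl⟩ := exists_real_coords hαβ y
  rw [show (0 : ℂ) = ((0 : ℝ) : ℂ) * α + ((0 : ℝ) : ℂ) * β by simp]
  simp only [lineInt_coords hαβ, lineInt_coords_left hαγ hγ hg₂,
    lineInt_coords_right hβγ hγ hg₁]
  have := ofReal_ne_zero.mpr hg₁
  have := ofReal_ne_zero.mpr hg₂
  push_cast
  field_simp
  ring

end ThreeDirections

def AddSubgroup.scalarMultipliers {R M : Type*} [Ring R] [AddCommGroup M] [Module R M]
    (A : AddSubgroup M) : Subring R where
  carrier := {r | ∀ x ∈ A, r • x ∈ A}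
  mul_mem' hr hs x hx := by rw [mul_smul]; exact hr _ (hs x hx)
  one_mem' x hx := by rwa [one_smul]
  add_mem' hr hs x hx := by rw [add_smul]; exact A.add_mem (hr x hx) (hs x hx)
  zero_mem' x _ := by rw [zero_smul]; exact A.zero_mem
  neg_mem' hr x hx := by rw [neg_smul]; exact A.neg_mem (hr x hx)

lemma AddSubgroup.ofReal_mem_of_mem_subring_closure (A : AddSubgroup ℂ) (h₁ : (1 : ℂ) ∈ A)
    {X : Set ℝ} (hX : ∀ p ∈ X, ∀ x ∈ A, (p : ℂ) * x ∈ A) {r : ℝ}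
    (hr : r ∈ Subring.closure X) : (r : ℂ) ∈ A := by
  have hle : Subring.closure X ≤ A.scalarMultipliers :=
    Subring.closure_le.mpr fun p hp x hx => by simpa only [real_smul] using hX p hp x hx
  simpa only [real_smul, mul_one] using hle hr 1 h₁

section Constructible

variable {U : Set ℂ}

lemma zero_mem_RU : (0 : ℂ) ∈ RU U := Set.mem_iUnion_of_mem 0 (Set.mem_insert _ _)

lemma one_mem_RU : (1 : ℂ) ∈ RU U := Set.mem_iUnion_of_mem 0 (Set.mem_insert_of_mem _ rfl)

lemma stepSet_mono {α β : ℂ} (hα : α ∈ U) (hβ : β ∈ U) (h₁ : α ≠ β) (h₂ : α ≠ -β)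
    (hαβ : brkt α β ≠ 0) : Monotone (stepSet U) :=
  monotone_nat_of_le_succ fun _ z hz =>
    ⟨α, hα, β, hβ, h₁, h₂, z, hz, z, hz, (lineInt_self hαβ z).symm⟩

lemma lineInt_mem_RU (hmono : Monotone (stepSet U)) {α β : ℂ} (hα : α ∈ U) (hβ : β ∈ U)
    (h₁ : α ≠ β) (h₂ : α ≠ -β) ⦃p q : ℂ⦄ (hp : p ∈ RU U) (hq : q ∈ RU U) :
    lineInt α β p q ∈ RU U := by
  obtain ⟨m, hpm⟩ := Set.mem_iUnion.mp hp
  obtain ⟨n, hqn⟩ := Set.mem_iUnion.mp hq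
  exact Set.mem_iUnion_of_mem (max m n + 1) ⟨α, hα, β, hβ, h₁, h₂,
    p, hmono (le_max_left m n) hpm, q, hmono (le_max_right m n) hqn, rfl⟩

lemma projSet_subset_RU (hmono : Monotone (stepSet U)) {p : ℝ} (hp : p ∈ projSet U) :
    (p : ℂ) ∈ RU U := by
  obtain ⟨γ, hγ, δ, hδ, h₁, h₂, z, ⟨α, hα, β, hβ, h₁', h₂', rfl⟩, hpz⟩ := hp
  have h₀ : (0 : ℂ) ∈ stepSet U 0 := Set.mem_insert _ _
  have hz : lineInt α β 0 1 ∈ stepSet U 1 :=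
    ⟨α, hα, β, hβ, h₁', h₂', 0, h₀, 1, Set.mem_insert_of_mem _ rfl, rfl⟩
  exact Set.mem_iUnion_of_mem 2 ⟨γ, hγ, δ, hδ, h₁, h₂, 0, hmono zero_le_one h₀, _, hz, hpz⟩

lemma ofReal_mul_mem_RU (hmono : Monotone (stepSet U)) {r : ℝ} (hr : (r : ℂ) ∈ RU U) {x : ℂ}
    (hx : x ∈ RU U) : r * x ∈ RU U := by
  obtain ⟨n, hxn⟩ := Set.mem_iUnion.mp hx
  clear hx
  induction n generalizing x with
  | zero =>
    rcases hxn with rfl | rfl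
    · rw [mul_zero]; exact zero_mem_RU
    · rwa [mul_one]
  | succ n ih =>
    obtain ⟨α, hα, β, hβ, h₁, h₂, p, hp, q, hq, rfl⟩ := hxn
    rw [← lineInt_ofReal_mul]
    exact lineInt_mem_RU hmono hα hβ h₁ h₂ (ih hp) (ih hq)

lemma exists_addSubgroup_coe_eq_RU (hmono : Monotone (stepSet U)) (hU : ∀ z ∈ U, ‖z‖ = 1)
    {u v w : ℂ} (hu : u ∈ U) (hv : v ∈ U) (hw : w ∈ U) (huv : u ≠ v) (huv' : u ≠ -v)
    (huw : u ≠ w) (huw' : u ≠ -w) (hvw : v ≠ w) (hvw' : v ≠ -w) :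
    ∃ A : AddSubgroup ℂ, (A : Set ℂ) = RU U := by
  have Iuv := lineInt_mem_RU hmono hu hv huv huv'
  have Iuw := lineInt_mem_RU hmono hu hw huw huw'
  have Ivw := lineInt_mem_RU hmono hv hw hvw hvw'
  have Buv := brkt_ne_zero (hU u hu) (hU v hv) huv huv'
  have Buw := brkt_ne_zero (hU u hu) (hU w hw) huw huw'
  have Bvw := brkt_ne_zero (hU v hv) (hU w hw) hvw hvw'
  have hadd : ∀ {x y}, x ∈ RU U → y ∈ RU U → x + y ∈ RU U := fun {x y} hx hy ↦ by
    rw [← lineInt_add_eq Buv Buw Bvw x y]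
    exact Iuv (Ivw (Iuw hx (Iuv zero_mem_RU hx)) (Iuv hy hx))
      (Iuw (Ivw hx (Iuv hx zero_mem_RU)) (Iuv hx hy))
  have hneg : ∀ {x}, x ∈ RU U → -x ∈ RU U := fun {x} hx ↦ by
    rw [← lineInt_neg_eq Buv Buw Bvw x]
    exact Iuv (Ivw zero_mem_RU (Iuv zero_mem_RU (Iuw hx zero_mem_RU)))
      (Iuw zero_mem_RU (Iuv (Ivw hx zero_mem_RU) zero_mem_RU))
  exact ⟨{ carrier := RU U, add_mem' := hadd, zero_mem' := zero_mem_RU, neg_mem' := hneg }, rfl⟩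

end Constructible

theorem stmt10_general (U : Set ℂ) (hU : ∀ z ∈ U, ‖z‖ = 1)
    (u v w : ℂ) (hu : u ∈ U) (hv : v ∈ U) (hw : w ∈ U)
    (huv : u ≠ v) (huv' : u ≠ -v) (huw : u ≠ w) (huw' : u ≠ -w)
    (hvw : v ≠ w) (hvw' : v ≠ -w) :
    (∀ p ∈ projSet U, ∀ x ∈ RU U, (p : ℂ) * x ∈ RU U) ∧
      (∀ r : ℝ, r ∈ Subring.closure (projSet U) → (r : ℂ) ∈ RU U) := by
  have hmono := stepSet_mono hu hv huv huv' (brkt_ne_zero (hU u hu) (hU v hv) huv huv')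
  have hP : ∀ p ∈ projSet U, ∀ x ∈ RU U, (p : ℂ) * x ∈ RU U := fun _ hp _ hx ↦
    ofReal_mul_mem_RU hmono (projSet_subset_RU hmono hp) hx
  refine ⟨hP, fun r hr => ?_⟩
  obtain ⟨A, hA⟩ := exists_addSubgroup_coe_eq_RU hmono hU hu hv hw huv huv' huw huw' hvw hvw'
  have h₁ : (1 : ℂ) ∈ A := by rw [← SetLike.mem_coe, hA]; exact one_mem_RU
  rw [← hA] at hP ⊢
  exact A.ofReal_mem_of_mem_subring_closure h₁ hP hr

/-- if `1 ∈ U` and `U` contains `u, v, w` with `1, u, v, w` pairwise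
non-±-equal, then `p·x ∈ R(U)` for every `p ∈ P` and `x ∈ R(U)`, and consequently
`ℤ[P] ⊆ R(U)`. -/
theorem stmt10 (U : Set ℂ) (hU : ∀ z ∈ U, ‖z‖ = 1) (h1U : (1 : ℂ) ∈ U)
    (u v w : ℂ) (hu : u ∈ U) (hv : v ∈ U) (hw : w ∈ U)
    (hu1 : u ≠ 1) (hu1' : u ≠ -1) (hv1 : v ≠ 1) (hv1' : v ≠ -1)
    (hw1 : w ≠ 1) (hw1' : w ≠ -1)
    (huv : u ≠ v) (huv' : u ≠ -v) (huw : u ≠ w) (huw' : u ≠ -w)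
    (hvw : v ≠ w) (hvw' : v ≠ -w) :
    (∀ p ∈ projSet U, ∀ x ∈ RU U, (p : ℂ) * x ∈ RU U) ∧
      (∀ r : ℝ, r ∈ Subring.closure (projSet U) → (r : ℂ) ∈ RU U) :=
  stmt10_general U hU u v w hu hv hw huv huv' huw huw' hvw hvw'
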